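/- arXiv:2306.14284 — 2 statements merged into one kernel-verified Lean document; each statement's English description precedes it below -/
import Mathlib

section
/- Step-by-step progress: let B be a broadcast protocol, w a word over actions, a an action, and m < n natural numbers. If w is feasible in B^m, wa is not feasible in B^m, but wa is feasible in B^n, then wa is feasible in B^{m+1}. -/
/-- A broadcast protocol: initial state, for each action a unique sending
transition `sendSrc a --a!!--> sendTgt a`, and for each action and state
exactly one receiving transition `s --a??--> recv a s`. -/
structure BP (S A : Type) where
  init : S
  sendSrc : A → S
  sendTgt : A → S
  recv : A → S → S

namespace BP

variable {S A : Type}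

/-- Initial configuration of `B^n`: all `n` processes in the initial state. -/
def initConfig [DecidableEq S] (B : BP S A) (n : ℕ) : S → ℕ :=
  fun s => if s = B.init then n else 0

/-- Successor configuration on action `a`: the sender leaves `sendSrc a`,
all other processes take their receiving transitions, and the sender
arrives at `sendTgt a`. -/
def succ [Fintype S] [DecidableEq S] (B : BP S A) (a : A) (q : S → ℕ) : S → ℕ :=
  fun s =>
    (∑ t : S, if B.recv a t = s then q t - (if t = B.sendSrc a then 1 else 0) else 0) +
      (if s = B.sendTgt a then 1 else 0)

/-- Run of the system from a configuration along a word (the reached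
configuration does not depend on which lit process sends). -/
def runFrom [Fintype S] [DecidableEq S] (B : BP S A) : (S → ℕ) → List A → Option (S → ℕ)
  | q, [] => some q
  | q, a :: w => if 1 ≤ q (B.sendSrc a) then B.runFrom (B.succ a q) w else none

/-- Configuration reached by `B^n` on word `w` (if `w` is feasible). -/
def cfg [Fintype S] [DecidableEq S] (B : BP S A) (n : ℕ) (w : List A) : Option (S → ℕ) :=
  B.runFrom (B.initConfig n) w

/-- `w` is feasible in `B^n`. -/
def Feasible [Fintype S] [DecidableEq S] (B : BP S A) (n : ℕ) (w : List A) : Prop :=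
  (B.cfg n w).isSome

/-- Receive-only image of a configuration. -/
def recvMap [Fintype S] [DecidableEq S] (B : BP S A) (a : A) (q : S → ℕ) : S → ℕ :=
  fun s => ∑ t : S, if B.recv a t = s then q t else 0

/-- Receive-only run along a word. -/
def recvRun [Fintype S] [DecidableEq S] (B : BP S A) : (S → ℕ) → List A → (S → ℕ)
  | q, [] => q
  | q, a :: w => B.recvRun (B.recvMap a q) w

lemma succ_add [Fintype S] [DecidableEq S] (B : BP S A) (a : A) (q1 q2 : S → ℕ)
    (h : 1 ≤ q1 (B.sendSrc a)) :
    B.succ a (fun s => q1 s + q2 s) = fun s => B.succ a q1 s + B.recvMap a q2 s := by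
  funext s
  simp only [succ, recvMap]
  rw [add_right_comm, ← Finset.sum_add_distrib]
  congr 1
  apply Finset.sum_congr rfl
  intro t _
  by_cases ht : B.recv a t = s
  · simp only [ht, if_true]
    by_cases hts : t = B.sendSrc a
    · subst hts
      simp only [if_true]
      omega
    · simp [hts]
  · simp [ht]

lemma runFrom_add [Fintype S] [DecidableEq S] (B : BP S A) :
    ∀ (w : List A) (q1 q2 c : S → ℕ), B.runFrom q1 w = some c →
      B.runFrom (fun s => q1 s + q2 s) w = some (fun s => c s + B.recvRun q2 w s)
  | [], q1, q2, c, h => by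
      simp only [runFrom, Option.some.injEq] at h ⊢
      subst h; rfl
  | a :: w, q1, q2, c, h => by
      simp only [runFrom] at h ⊢
      by_cases h1 : 1 ≤ q1 (B.sendSrc a)
      · rw [if_pos h1] at h
        rw [if_pos (le_trans h1 (Nat.le_add_right _ _))]
        rw [B.succ_add a q1 q2 h1]
        exact B.runFrom_add w _ _ c h
      · rw [if_neg h1] at h; exact absurd h (by simp)

lemma recvMap_smul [Fintype S] [DecidableEq S] (B : BP S A) (a : A) (k : ℕ) (q : S → ℕ) :
    B.recvMap a (fun s => k * q s) = fun s => k * B.recvMap a q s := by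
  funext s
  simp only [recvMap, Finset.mul_sum, mul_ite, mul_zero]

lemma recvRun_smul [Fintype S] [DecidableEq S] (B : BP S A) :
    ∀ (w : List A) (k : ℕ) (q : S → ℕ),
      B.recvRun (fun s => k * q s) w = fun s => k * B.recvRun q w s
  | [], k, q => rfl
  | a :: w, k, q => by
      simp only [recvRun, B.recvMap_smul a k q]
      exact B.recvRun_smul w k _

lemma runFrom_append [Fintype S] [DecidableEq S] (B : BP S A) :
    ∀ (w1 w2 : List A) (q : S → ℕ),
      B.runFrom q (w1 ++ w2) = (B.runFrom q w1).bind (fun c => B.runFrom c w2)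
  | [], w2, q => rfl
  | a :: w1, w2, q => by
      simp only [List.cons_append, runFrom]
      by_cases h : 1 ≤ q (B.sendSrc a)
      · rw [if_pos h, if_pos h]; exact B.runFrom_append w1 w2 _
      · rw [if_neg h, if_neg h]; rfl

lemma initConfig_split [DecidableEq S] (B : BP S A) {m n : ℕ} (h : m ≤ n) :
    B.initConfig n = fun s => B.initConfig m s + (n - m) * B.initConfig 1 s := by
  funext s
  simp only [initConfig]
  by_cases hs : s = B.init <;> simp [hs] <;> omega

end BP

/-- step-by-step progress: if `w` is feasible in `B^m`, `wa` is not
feasible in `B^m`, but `wa` is feasible in `B^n` for some `n > m`, then `wa` is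
feasible in `B^{m+1}`. -/
theorem BP.step_by_step_progress {S A : Type} [Fintype S] [DecidableEq S]
    (B : BP S A) (m n : ℕ) (hmn : m < n) (w : List A) (a : A)
    (h1 : B.Feasible m w) (h2 : ¬ B.Feasible m (w ++ [a]))
    (h3 : B.Feasible n (w ++ [a])) :
    B.Feasible (m + 1) (w ++ [a]) := by
  classical
  rw [Feasible, cfg] at h1
  obtain ⟨c, hc⟩ := Option.isSome_iff_exists.mp h1
  set v : S → ℕ := B.recvRun (B.initConfig 1) w with hv
  have hsrc : c (B.sendSrc a) = 0 := by
    by_contra h0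
    apply h2
    rw [Feasible, cfg, B.runFrom_append, hc, Option.bind_some]
    simp only [runFrom]
    rw [if_pos (by omega)]
    simp
  have hn : B.runFrom (B.initConfig n) w = some (fun s => c s + (n - m) * v s) := by
    have h' := B.runFrom_add w (B.initConfig m) (fun s => (n - m) * B.initConfig 1 s) c hc
    rw [B.recvRun_smul] at h'
    rw [← B.initConfig_split hmn.le] at h'
    exact h'
  have hvsrc : 1 ≤ v (B.sendSrc a) := by
    rw [Feasible, cfg, B.runFrom_append, hn, Option.bind_some] at h3
    simp only [runFrom] at h3
    by_contra hlt
    have hv0 : v (B.sendSrc a) = 0 := by omega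
    rw [if_neg (by simp [hv0, hsrc])] at h3
    simp at h3
  have hm1 : B.runFrom (B.initConfig (m + 1)) w = some (fun s => c s + 1 * v s) := by
    have h' := B.runFrom_add w (B.initConfig m) (fun s => (m + 1 - m) * B.initConfig 1 s) c hc
    rw [B.recvRun_smul] at h'
    rw [← B.initConfig_split (Nat.le_succ m)] at h'
    simpa using h'
  rw [Feasible, cfg, B.runFrom_append, hm1, Option.bind_some]
  simp only [runFrom]
  rw [if_pos (by omega)]
  simp
end

section
/- Reachability closure in the characteristic-set tree: for every configuration p reachable in B^n and every shortest word w reaching p in B^n, the node labeled w appears in the tree T_n constructed by the CS-generation procedure, and its annotation equals p. -/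
/-- `B` is fine: no hidden states and it has a cutoff. -/
def BP.Fine {S A : Type} [Fintype S] [DecidableEq S] (B : BP S A) : Prop :=
  (∀ s : S, ∃ a : A, B.sendSrc a = s) ∧
  ∃ c : ℕ, ∀ k, c < k → ∀ w : List A, B.Feasible k w ↔ B.Feasible c w

/-- Nodes of the tree `T_n` built by the characteristic-set generation
procedure: `T_0` has only the root `ε`; `T_{n+1}` contains all nodes of `T_n`,
and for every node `w` that is positive (feasible) in `B^{n+1}` and not
declared a leaf — i.e., `w` is not of the form `v ++ [b]` with a strict
prefix `u` of `v` reaching the same configuration of `B^{n+1}` as `v` — all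
its children `w ++ [a]` are added. -/
inductive BP.TreeNode {S A : Type} [Fintype S] [DecidableEq S] (B : BP S A) :
    ℕ → List A → Prop
  | root (n : ℕ) : BP.TreeNode B n []
  | prev (n : ℕ) (w : List A) : BP.TreeNode B n w → BP.TreeNode B (n + 1) w
  | child (n : ℕ) (w : List A) (a : A) :
      BP.TreeNode B (n + 1) w → B.Feasible (n + 1) w →
      (∀ (v : List A) (b : A), w = v ++ [b] →
        ¬ ∃ u : List A, u <+: v ∧ u ≠ v ∧ B.cfg (n + 1) u = B.cfg (n + 1) v) →
      BP.TreeNode B (n + 1) (w ++ [a])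

/-!
Induct on the length of `w`. Prefixes of shortest words are shortest words, so every
prefix of `w` is already a node of `T_n`; and along a shortest word no configuration
repeats, since cutting out the loop between two equal configurations would give a
shorter word to the same configuration. Hence no proper prefix of `w` is declared a
leaf, and each of them spawns the next one as a child. For `n = 0` only the empty word
is feasible.
-/

namespace BP

variable {S A : Type} [Fintype S] [DecidableEq S] (B : BP S A)

lemma runFrom_append_s13 (q : S → ℕ) (u t : List A) :
    B.runFrom q (u ++ t) = (B.runFrom q u).bind (B.runFrom · t) := by
  induction u generalizing q with
  | nil => rfl
  | cons a u ih =>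
    simp only [List.cons_append, runFrom]
    split
    · exact ih _
    · rfl

lemma cfg_append (n : ℕ) (u t : List A) :
    B.cfg n (u ++ t) = (B.cfg n u).bind (B.runFrom · t) :=
  B.runFrom_append_s13 _ u t

lemma Feasible.of_append {n : ℕ} {u t : List A} (h : B.Feasible n (u ++ t)) :
    B.Feasible n u := by
  unfold Feasible at h ⊢
  rw [cfg_append] at h
  exact Option.isSome_of_isSome_bind h

lemma eq_nil_of_feasible_zero {w : List A} (h : B.Feasible 0 w) : w = [] := by
  cases w with
  | nil => rfl
  | cons a t => simp [Feasible, cfg, runFrom, initConfig] at h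

def IsShortest (n : ℕ) (w : List A) : Prop :=
  ∀ w' : List A, B.cfg n w' = B.cfg n w → w.length ≤ w'.length

variable {B}

lemma IsShortest.of_append {n : ℕ} {u t : List A} (h : B.IsShortest n (u ++ t)) :
    B.IsShortest n u := by
  intro u' hu'
  have hcfg : B.cfg n (u' ++ t) = B.cfg n (u ++ t) := by
    rw [cfg_append, cfg_append, hu']
  simpa using h _ hcfg

lemma IsShortest.cfg_ne_of_prefix {n : ℕ} {u v : List A} (h : B.IsShortest n v)
    (hpre : u <+: v) (hne : u ≠ v) : B.cfg n u ≠ B.cfg n v := by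
  intro hcfg
  have hlt : u.length < v.length :=
    lt_of_le_of_ne hpre.length_le (fun hlen => hne (hpre.eq_of_length hlen))
  exact absurd (h u hcfg) (not_le.mpr hlt)

lemma treeNode_of_isShortest {n : ℕ} {w : List A} (hshort : B.IsShortest n w)
    (hfeas : B.Feasible n w) : B.TreeNode n w := by
  cases n with
  | zero => exact B.eq_nil_of_feasible_zero hfeas ▸ .root 0
  | succ m =>
    induction w using List.reverseRecOn with
    | nil => exact .root (m + 1)
    | append_singleton v a ih =>
      have hv : B.IsShortest (m + 1) v := hshort.of_append
      have hvfeas : B.Feasible (m + 1) v := hfeas.of_append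
      refine .child m v a (ih hv hvfeas) hvfeas ?_
      rintro v' b rfl ⟨u, hpre, hne, hcfg⟩
      exact hv.of_append.cfg_ne_of_prefix hpre hne hcfg

end BP

theorem BP.treeNode_of_shortest_general {S A : Type} [Fintype S] [DecidableEq S]
    (B : BP S A) (n : ℕ) (p : S → ℕ) (w : List A)
    (hw : B.cfg n w = some p)
    (hshort : ∀ w' : List A, B.cfg n w' = some p → w.length ≤ w'.length) :
    B.TreeNode n w :=
  BP.treeNode_of_isShortest (fun w' hw' => hshort w' (hw' ▸ hw))
    (by simp [BP.Feasible, hw])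

/-- for every configuration `p` reachable in `B^n` and every
shortest word `w` reaching `p` in `B^n`, the node `w` appears in the tree
`T_n` (its annotation is `B^n(w) = p` by definition). -/
theorem BP.treeNode_of_shortest {S A : Type} [Fintype S] [DecidableEq S]
    (B : BP S A) (hfine : B.Fine) (n : ℕ) (p : S → ℕ) (w : List A)
    (hw : B.cfg n w = some p)
    (hshort : ∀ w' : List A, B.cfg n w' = some p → w.length ≤ w'.length) :
    B.TreeNode n w :=
  BP.treeNode_of_shortest_general B n p w hw hshort
end
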